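/- arXiv:math/0006114 — 7 statements merged into one kernel-verified Lean document; each statement's English description precedes it below -/
import Mathlib

section
/- If Z is a matrix with non-negative integer entries commuting with a unitary matrix S, Z_{0,0}=1, and the eigenvalue ratios d_λ = S_{λ,0}/S_{0,0} are positive reals satisfying |S_{λ,ρ}| ≤ d_λ S_{0,ρ} for all λ,ρ, then each entry satisfies Z_{λ,μ} ≤ d_λ d_μ. -/
open Matrix Finset

/-!
Commuting with the unitary `S` means `Z = S Z Sᴴ`, so every entry `Z l m` is a combination of the
entries of `Z` with coefficients `S l ρ * conj (S m σ)`. By the Perron-Frobenius bound these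
coefficients are dominated in norm by `d l * d m` times the coefficients `S o ρ * S o σ` of the
`(o, o)` entry, which are non-negative reals, as are the entries of `Z`. Hence
`|Z l m| ≤ d l * d m * Z o o = d l * d m`.
-/

open scoped ComplexOrder

namespace RCLike

variable {K ι : Type*} [RCLike K]

theorem norm_sum_of_nonneg (s : Finset ι) {f : ι → K} (hf : ∀ i ∈ s, 0 ≤ f i) :
    ‖∑ i ∈ s, f i‖ = ∑ i ∈ s, ‖f i‖ := by
  apply ofReal_injective (K := K)
  rw [norm_of_nonneg' (sum_nonneg hf), ofReal_sum]
  exact sum_congr rfl fun i hi => (norm_of_nonneg' (hf i hi)).symm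

end RCLike

namespace Matrix

variable {α K l m n p : Type*} [Fintype m] [Fintype n]

theorem mul_mul_conjTranspose_apply [NonUnitalSemiring α] [StarRing α] (A : Matrix l m α)
    (Z : Matrix m n α) (B : Matrix p n α) (i : l) (j : p) :
    (A * Z * Bᴴ) i j = ∑ σ, ∑ ρ, A i ρ * Z ρ σ * star (B j σ) := by
  simp only [mul_apply, conjTranspose_apply, sum_mul]

theorem norm_mul_mul_conjTranspose_apply_le [NonUnitalSeminormedRing α] [StarRing α]
    [NormedStarGroup α] (A : Matrix l m α) (Z : Matrix m n α) (B : Matrix p n α) (i : l) (j : p) :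
    ‖(A * Z * Bᴴ) i j‖ ≤ ∑ σ, ∑ ρ, ‖A i ρ‖ * ‖Z ρ σ‖ * ‖B j σ‖ := by
  rw [mul_mul_conjTranspose_apply]
  refine (norm_sum_le _ _).trans <| sum_le_sum fun σ _ =>
    (norm_sum_le _ _).trans <| sum_le_sum fun ρ _ => ?_
  rw [← norm_star (B j σ)]
  exact (norm_mul_le _ _).trans <| mul_le_mul_of_nonneg_right (norm_mul_le _ _) (norm_nonneg _)

theorem norm_mul_mul_conjTranspose_apply_of_nonneg [RCLike K] {A : Matrix l m K}
    {Z : Matrix m n K} {B : Matrix p n K} {i : l} {j : p} (hA : ∀ ρ, 0 ≤ A i ρ)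
    (hZ : ∀ ρ σ, 0 ≤ Z ρ σ) (hB : ∀ σ, 0 ≤ B j σ) :
    ‖(A * Z * Bᴴ) i j‖ = ∑ σ, ∑ ρ, ‖A i ρ‖ * ‖Z ρ σ‖ * ‖B j σ‖ := by
  have hterm : ∀ σ ρ, 0 ≤ A i ρ * Z ρ σ * star (B j σ) := fun σ ρ =>
    mul_nonneg (mul_nonneg (hA ρ) (hZ ρ σ)) (star_nonneg_iff.2 (hB σ))
  rw [mul_mul_conjTranspose_apply,
    RCLike.norm_sum_of_nonneg _ fun σ _ => sum_nonneg fun ρ _ => hterm σ ρ]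
  refine sum_congr rfl fun σ _ => ?_
  rw [RCLike.norm_sum_of_nonneg _ fun ρ _ => hterm σ ρ]
  simp only [norm_mul, norm_star]

theorem eq_mul_mul_conjTranspose_of_commute [DecidableEq n] [Semiring α] [StarRing α]
    {S Z : Matrix n n α} (hS : S * Sᴴ = 1) (hZS : Z * S = S * Z) : Z = S * Z * Sᴴ := by
  rw [← hZS, Matrix.mul_assoc, hS, Matrix.mul_one]

theorem norm_apply_le_mul_norm_apply_of_commute [DecidableEq n] [RCLike K] {S Z : Matrix n n K}
    {d : n → ℝ} (o : n) (hS : S * Sᴴ = 1) (hZS : Z * S = S * Z) (hZ : ∀ ρ σ, 0 ≤ Z ρ σ)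
    (hSo : ∀ ρ, 0 ≤ S o ρ) (hdom : ∀ l ρ, ‖S l ρ‖ ≤ d l * ‖S o ρ‖) (l m : n) :
    ‖Z l m‖ ≤ d l * d m * ‖Z o o‖ := by
  have hconj := eq_mul_mul_conjTranspose_of_commute hS hZS
  calc ‖Z l m‖ = ‖(S * Z * Sᴴ) l m‖ := by rw [← hconj]
    _ ≤ ∑ σ, ∑ ρ, ‖S l ρ‖ * ‖Z ρ σ‖ * ‖S m σ‖ := norm_mul_mul_conjTranspose_apply_le _ _ _ _ _
    _ ≤ ∑ σ, ∑ ρ, d l * ‖S o ρ‖ * ‖Z ρ σ‖ * (d m * ‖S o σ‖) := by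
      refine sum_le_sum fun σ _ => sum_le_sum fun ρ _ => ?_
      have hdl : 0 ≤ d l * ‖S o ρ‖ := (norm_nonneg _).trans (hdom l ρ)
      gcongr
      exacts [hdom l ρ, hdom m σ]
    _ = d l * d m * ∑ σ, ∑ ρ, ‖S o ρ‖ * ‖Z ρ σ‖ * ‖S o σ‖ := by
      simp only [mul_sum]
      exact sum_congr rfl fun σ _ => sum_congr rfl fun ρ _ => by ring
    _ = d l * d m * ‖Z o o‖ := by
      rw [hconj, norm_mul_mul_conjTranspose_apply_of_nonneg hSo hZ hSo, ← hconj]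

end Matrix

theorem stmt_0_general {Δ : Type*} [Fintype Δ] [DecidableEq Δ] (o : Δ)
    (S Z : Matrix Δ Δ ℂ) (d : Δ → ℝ)
    (hSU : S * S.conjTranspose = 1)
    (hSpos : ∀ ρ, 0 < (S o ρ).re ∧ (S o ρ).im = 0)
    (hPF : ∀ l ρ, ‖S l ρ‖ ≤ d l * (S o ρ).re)
    (hZnat : ∀ l m, ∃ n : ℕ, Z l m = (n : ℂ))
    (hZS : Z * S = S * Z)
    (hZ00 : Z o o = 1) :
    ∀ l m, (Z l m).re ≤ d l * d m := by
  have hSo : ∀ ρ, 0 ≤ S o ρ := fun ρ =>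
    Complex.nonneg_iff.2 ⟨(hSpos ρ).1.le, (hSpos ρ).2.symm⟩
  have hZ : ∀ ρ σ, 0 ≤ Z ρ σ := fun ρ σ => by
    obtain ⟨n, hn⟩ := hZnat ρ σ
    exact hn ▸ Nat.cast_nonneg n
  have hdom : ∀ l ρ, ‖S l ρ‖ ≤ d l * ‖S o ρ‖ := fun l ρ =>
    Complex.re_eq_norm.2 (hSo ρ) ▸ hPF l ρ
  intro l m
  calc (Z l m).re ≤ ‖Z l m‖ := Complex.re_le_norm _
    _ ≤ d l * d m * ‖Z o o‖ := norm_apply_le_mul_norm_apply_of_commute o hSU hZS hZ hSo hdom l m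
    _ = d l * d m := by rw [hZ00, norm_one, mul_one]

/-- If `Z` is a matrix with non-negative integer entries commuting with a unitary matrix `S`,
`Z o o = 1`, and the ratios `d l = S l o / S o o` are positive reals satisfying the
Perron-Frobenius bound `|S l ρ| ≤ d l * S o ρ`, then `Z l m ≤ d l * d m`. -/
theorem stmt_0 {Δ : Type*} [Fintype Δ] [DecidableEq Δ] (o : Δ)
    (S Z : Matrix Δ Δ ℂ) (d : Δ → ℝ)
    (hSU : S * S.conjTranspose = 1)
    (hSpos : ∀ ρ, 0 < (S o ρ).re ∧ (S o ρ).im = 0)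
    (hd : ∀ l, S l o = (d l : ℂ) * S o o)
    (hdpos : ∀ l, 0 < d l)
    (hPF : ∀ l ρ, ‖S l ρ‖ ≤ d l * (S o ρ).re)
    (hZnat : ∀ l m, ∃ n : ℕ, Z l m = (n : ℂ))
    (hZS : Z * S = S * Z)
    (hZ00 : Z o o = 1) :
    ∀ l m, (Z l m).re ≤ d l * d m :=
  stmt_0_general o S Z d hSU hSpos hPF hZnat hZS hZ00
end

section
/- If Z is a non-negative integer matrix commuting with a unitary matrix S, with Z_{0,0}=1 and d_λ = S_{λ,0}/S_{0,0} ≥ 1 positive for all λ, then the sum of all entries of Z is bounded by 1/S_{0,0}² = Σ_λ d_λ². In particular there are only finitely many such matrices Z. -/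
open Matrix Finset

/-!
Since `S` is unitary and commutes with `Z`, we have `Sᴴ Z S = Z`. The `0`-th column of `S` is the
real vector `S₀₀ • d`, so reading off the `(0,0)` entry gives
`1 = Z₀₀ = S₀₀² ∑ d_λ d_μ Z_{λμ}`, and as `d ≥ 1` and `Z ≥ 0` the entry sum of `Z` is at most
`∑ d_λ d_μ Z_{λμ} = 1 / S₀₀²`. The same computation with `Z = 1` gives `1 = S₀₀² ∑ d_λ²`.
Finitely many natural matrices have bounded entry sum.
-/

theorem Matrix.conjTranspose_mul_mul_eq_of_commute {Δ R : Type*} [Fintype Δ] [DecidableEq Δ]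
    [CommRing R] [StarRing R] {S Z : Matrix Δ Δ R} (hSU : S * Sᴴ = 1) (hZS : Z * S = S * Z) :
    Sᴴ * Z * S = Z := by
  rw [Matrix.mul_assoc, hZS, ← Matrix.mul_assoc, mul_eq_one_comm.mp hSU, Matrix.one_mul]

theorem Matrix.conjTranspose_mul_mul_apply_of_col_eq {Δ : Type*} [Fintype Δ] {S : Matrix Δ Δ ℂ}
    {o : Δ} {v : Δ → ℝ} (hv : ∀ l, S l o = v l) (M : Matrix Δ Δ ℂ) :
    (Sᴴ * M * S) o o = ∑ l, ∑ m, ((v l * v m : ℝ) : ℂ) * M l m := by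
  simp only [mul_apply, conjTranspose_apply, hv, Complex.star_def, Complex.conj_ofReal,
    sum_mul, Complex.ofReal_mul]
  rw [sum_comm]
  exact sum_congr rfl fun l _ => sum_congr rfl fun m _ => by ring

theorem sum_sum_le_sum_sum_mul_mul_of_one_le {ι : Type*} [Fintype ι] {w : ι → ℝ}
    (hw : ∀ i, 1 ≤ w i) {a : ι → ι → ℝ} (ha : ∀ i j, 0 ≤ a i j) :
    ∑ i, ∑ j, a i j ≤ ∑ i, ∑ j, w i * w j * a i j :=
  sum_le_sum fun i _ => sum_le_sum fun j _ =>
    le_mul_of_one_le_left (ha i j) (one_le_mul_of_one_le_of_one_le (hw i) (hw j))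

theorem setOf_natCast_sum_sum_re_le_finite {Δ : Type*} [Fintype Δ] (B : ℝ) :
    {Z : Matrix Δ Δ ℂ | (∀ l m, ∃ n : ℕ, Z l m = n) ∧ ∑ l, ∑ m, (Z l m).re ≤ B}.Finite := by
  have hT : ((fun n : ℕ => (n : ℂ)) '' Set.Iic ⌈B⌉₊).Finite := (Set.finite_Iic _).image _
  refine (Set.Finite.pi fun _ => Set.Finite.pi fun _ => hT).subset ?_
  rintro Z ⟨hZnat, hZB⟩ l - m -
  choose N hN using hZnat
  refine ⟨N l m, ?_, (hN l m).symm⟩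
  have hle : (N l m : ℝ) ≤ B := calc
    (N l m : ℝ) ≤ ∑ m', (N l m' : ℝ) := single_le_sum (fun _ _ => Nat.cast_nonneg _) (mem_univ m)
    _ ≤ ∑ l', ∑ m', (N l' m' : ℝ) :=
        single_le_sum (fun _ _ => sum_nonneg fun _ _ => Nat.cast_nonneg _) (mem_univ l)
    _ ≤ B := by simpa [hN] using hZB
  exact_mod_cast hle.trans (Nat.le_ceil B)

section Column

variable {Δ : Type*} {o : Δ} {S : Matrix Δ Δ ℂ} {d : Δ → ℝ}

theorem col_eq_ofReal_mul_re (hS00 : (S o o).im = 0) (hd : ∀ l, S l o = (d l : ℂ) * S o o)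
    (l : Δ) : S l o = ((d l * (S o o).re : ℝ) : ℂ) := by
  rw [hd, Complex.ofReal_mul]
  congr 1
  exact Complex.ext (by simp) (by simp [hS00])

variable [Fintype Δ] [DecidableEq Δ]

theorem one_div_sq_eq_sum_sq (hSU : S * Sᴴ = 1) (hS00 : 0 < (S o o).re ∧ (S o o).im = 0)
    (hd : ∀ l, S l o = (d l : ℂ) * S o o) :
    1 / (S o o).re ^ 2 = ∑ l, d l ^ 2 := by
  have h : (Sᴴ * (1 : Matrix Δ Δ ℂ) * S) o o = 1 := by
    rw [Matrix.mul_one, mul_eq_one_comm.mp hSU, one_apply_eq]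
  rw [conjTranspose_mul_mul_apply_of_col_eq (col_eq_ofReal_mul_re hS00.2 hd)] at h
  simp only [one_apply, mul_ite, mul_one, mul_zero, sum_ite_eq, mem_univ, if_true,
    ← Complex.ofReal_sum, Complex.ofReal_eq_one] at h
  have hsum : (∑ l, d l ^ 2) * (S o o).re ^ 2 = 1 := by
    rw [sum_mul, ← h]
    exact sum_congr rfl fun _ _ => by ring
  rw [div_eq_iff (pow_pos hS00.1 2).ne', hsum]

theorem sum_sum_re_le_one_div_sq {Z : Matrix Δ Δ ℂ} (hSU : S * Sᴴ = 1)
    (hS00 : 0 < (S o o).re ∧ (S o o).im = 0) (hd : ∀ l, S l o = (d l : ℂ) * S o o)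
    (hdge : ∀ l, 1 ≤ d l) (hZnat : ∀ l m, ∃ n : ℕ, Z l m = (n : ℂ)) (hZS : Z * S = S * Z)
    (hZ00 : Z o o = 1) :
    ∑ l, ∑ m, (Z l m).re ≤ 1 / (S o o).re ^ 2 := by
  choose N hN using hZnat
  have hweighted : (S o o).re ^ 2 * ∑ l, ∑ m, d l * d m * (N l m : ℝ) = 1 := by
    have h : (Sᴴ * Z * S) o o = 1 := by rw [conjTranspose_mul_mul_eq_of_commute hSU hZS, hZ00]
    rw [conjTranspose_mul_mul_apply_of_col_eq (col_eq_ofReal_mul_re hS00.2 hd)] at h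
    simp only [hN, ← Complex.ofReal_natCast, ← Complex.ofReal_mul, ← Complex.ofReal_sum,
      Complex.ofReal_eq_one] at h
    rw [← h, mul_sum]
    exact sum_congr rfl fun l _ => by rw [mul_sum]; exact sum_congr rfl fun m _ => by ring
  simp only [hN, Complex.natCast_re]
  calc _ ≤ ∑ l, ∑ m, d l * d m * (N l m : ℝ) :=
        sum_sum_le_sum_sum_mul_mul_of_one_le hdge fun _ _ => Nat.cast_nonneg _
    _ = 1 / (S o o).re ^ 2 := by rw [eq_div_iff (pow_pos hS00.1 2).ne', mul_comm, hweighted]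

end Column

theorem stmt_1_general {Δ : Type*} [Fintype Δ] [DecidableEq Δ] (o : Δ)
    (S Z : Matrix Δ Δ ℂ) (d : Δ → ℝ)
    (hSU : S * S.conjTranspose = 1)
    (hS00 : 0 < (S o o).re ∧ (S o o).im = 0)
    (hd : ∀ l, S l o = (d l : ℂ) * S o o)
    (hdge : ∀ l, 1 ≤ d l)
    (hZnat : ∀ l m, ∃ n : ℕ, Z l m = (n : ℂ))
    (hZS : Z * S = S * Z)
    (hZ00 : Z o o = 1) :
    (∑ l, ∑ m, (Z l m).re) ≤ 1 / (S o o).re ^ 2 ∧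
    (1 / (S o o).re ^ 2 = ∑ l, d l ^ 2) ∧
    {Z' : Matrix Δ Δ ℂ |
      (∀ l m, ∃ n : ℕ, Z' l m = (n : ℂ)) ∧ Z' * S = S * Z' ∧ Z' o o = 1}.Finite :=
  ⟨sum_sum_re_le_one_div_sq hSU hS00 hd hdge hZnat hZS hZ00, one_div_sq_eq_sum_sq hSU hS00 hd,
    (setOf_natCast_sum_sum_re_le_finite _).subset fun _ ⟨hnat, hcomm, h00⟩ =>
      ⟨hnat, sum_sum_re_le_one_div_sq hSU hS00 hd hdge hnat hcomm h00⟩⟩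

/-- If `Z` is a non-negative integer matrix commuting with a unitary matrix `S`, with
`Z o o = 1` and `d l = S l o / S o o ≥ 1` positive for all `l`, then the sum of all entries
of `Z` is bounded by `1 / (S o o)^2 = ∑ l, d l ^ 2`.  In particular there are only finitely
many such matrices `Z`. -/
theorem stmt_1 {Δ : Type*} [Fintype Δ] [DecidableEq Δ] (o : Δ)
    (S Z : Matrix Δ Δ ℂ) (d : Δ → ℝ)
    (hSU : S * S.conjTranspose = 1)
    (hS00 : 0 < (S o o).re ∧ (S o o).im = 0)
    (hd : ∀ l, S l o = (d l : ℂ) * S o o)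
    (hdge : ∀ l, 1 ≤ d l)
    (hPF : ∀ l ρ, ‖S l ρ‖ ≤ d l * ‖S o ρ‖)
    (hZnat : ∀ l m, ∃ n : ℕ, Z l m = (n : ℂ))
    (hZS : Z * S = S * Z)
    (hZ00 : Z o o = 1) :
    (∑ l, ∑ m, (Z l m).re) ≤ 1 / (S o o).re ^ 2 ∧
    (1 / (S o o).re ^ 2 = ∑ l, d l ^ 2) ∧
    {Z' : Matrix Δ Δ ℂ |
      (∀ l m, ∃ n : ℕ, Z' l m = (n : ℂ)) ∧ Z' * S = S * Z' ∧ Z' o o = 1}.Finite :=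
  stmt_1_general o S Z d hSU hS00 hd hdge hZnat hZS hZ00
end

section
/- For the Z_n conformal field theory modular invariants Z^{(δ)}, the diagonal entry Z^{(δ)}_{λ,λ} equals 1 if λ ≡ 0 mod ñ/δ and 0 otherwise, where ñ = n if n is odd and ñ = n/2 if n is even. -/
/-!
Write `a = δ/α` and `m = ñ/(δα)`, so that `δ = αa`, `ñ/δ = αm`, `n/α = e·a·αm` with `e = n/ñ`,
and `ω - 1 = 2sa` by the defining relation of `r, s`. For `λ = αy` the condition
`μ ≡ ωλ mod n/α` at `μ = λ` becomes `e·m ∣ 2sy`. Since `rm - sa = 1`, `m` is coprime to `s`,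
and for `e = 1` (`n` odd) also to `2`, because `m ∣ n`; either way the condition is `m ∣ y`,
i.e. `ñ/δ ∣ λ`.
-/

lemma Int.mul_dvd_two_mul_iff {e m s y : ℤ} (hms : IsCoprime m s)
    (he : e = 2 ∨ e = 1 ∧ Odd m) : e * m ∣ 2 * s * y ↔ m ∣ y := by
  refine ⟨fun h => ?_, fun ⟨k, hk⟩ => ?_⟩
  · rcases he with rfl | ⟨rfl, hm⟩
    · rw [mul_assoc, mul_dvd_mul_iff_left two_ne_zero] at h
      exact hms.dvd_of_dvd_mul_left h
    · rw [one_mul] at h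
      exact ((Int.isCoprime_two_right.mpr hm).mul_right hms).dvd_of_dvd_mul_left h
  · rcases he with rfl | ⟨rfl, -⟩
    · exact ⟨s * k, by rw [hk]; ring⟩
    · exact ⟨2 * s * k, by rw [hk]; ring⟩

lemma Int.dvd_and_mul_dvd_iff {α a m e s x : ℤ} (hα : α ≠ 0) (ha : a ≠ 0)
    (hms : IsCoprime m s) (he : e = 2 ∨ e = 1 ∧ Odd m) :
    α ∣ x ∧ e * (a * (α * m)) ∣ 2 * s * a * x ↔ α * m ∣ x := by
  constructor
  · rintro ⟨⟨y, rfl⟩, h⟩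
    have : a * α * (e * m) ∣ a * α * (2 * s * y) := by convert h using 1 <;> ring
    rw [mul_dvd_mul_iff_left (mul_ne_zero ha hα), Int.mul_dvd_two_mul_iff hms he] at this
    exact mul_dvd_mul_left α this
  · rintro ⟨y, rfl⟩
    have h := mul_dvd_mul_left (a * α)
      ((Int.mul_dvd_two_mul_iff hms he).mpr (dvd_mul_right m y))
    refine ⟨⟨m * y, by ring⟩, ?_⟩
    rwa [show a * α * (e * m) = e * (a * (α * m)) by ring,
      show a * α * (2 * s * (m * y)) = 2 * s * a * (α * m * y) by ring] at h

lemma exists_eq_mul_of_eq_ite_even {n nt : ℕ} (hnt : nt = if Even n then n / 2 else n) :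
    ∃ e, n = e * nt ∧ (e = 2 ∨ e = 1 ∧ Odd n) := by
  split_ifs at hnt with h
  · exact ⟨2, by rw [hnt, Nat.mul_div_cancel' h.two_dvd], Or.inl rfl⟩
  · exact ⟨1, by rw [hnt, one_mul], Or.inr ⟨rfl, Nat.not_even_iff_odd.mp h⟩⟩

lemma dvd_and_dvd_iff_dvd_div {n nt δ α : ℕ} {r s : ℤ}
    (hnt : nt = if Even n then n / 2 else n) (hδ : δ ∣ nt) (hα : α = Nat.gcd δ (nt / δ))
    (hrs : r * ((nt / (δ * α) : ℕ) : ℤ) - s * ((δ / α : ℕ) : ℤ) = 1) (x : ℤ) :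
    (α : ℤ) ∣ x ∧ ((n / α : ℕ) : ℤ) ∣ 2 * s * ((δ / α : ℕ) : ℤ) * x ↔ ((nt / δ : ℕ) : ℤ) ∣ x := by
  -- `δ = 0` would force `α = 0`, making both quotients in `hrs` vanish.
  have hδ0 : δ ≠ 0 := by rintro rfl; simp [hα] at hrs
  have hα0 : α ≠ 0 := hα ▸ Nat.gcd_ne_zero_left hδ0
  have hαδ : α ∣ δ := hα ▸ Nat.gcd_dvd_left _ _
  set a := δ / α
  set m := nt / (δ * α)
  have hδa : δ = α * a := (Nat.mul_div_cancel' hαδ).symm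
  have hntδ : nt / δ = α * m := by
    rw [show m = nt / δ / α from (Nat.div_div_eq_div_mul ..).symm,
      Nat.mul_div_cancel' (hα ▸ Nat.gcd_dvd_right _ _)]
  have hnt_eq : nt = α * (a * (α * m)) := by
    rw [← mul_assoc, ← hδa, ← hntδ, Nat.mul_div_cancel' hδ]
  obtain ⟨e, hne, he⟩ := exists_eq_mul_of_eq_ite_even hnt
  have hnα : n / α = e * (a * (α * m)) := by
    rw [hne, hnt_eq, Nat.mul_left_comm, Nat.mul_div_cancel_left _ (Nat.pos_of_ne_zero hα0)]
  have hm : e = 2 ∨ e = 1 ∧ Odd m := he.imp_right fun ⟨he1, hn⟩ =>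
    ⟨he1, hn.of_dvd_nat ⟨α * a * α, by rw [hne, he1, one_mul, hnt_eq]; ring⟩⟩
  rw [hntδ, hnα]
  push_cast
  exact Int.dvd_and_mul_dvd_iff (by exact_mod_cast hα0)
    (by exact_mod_cast fun ha => hδ0 (by rw [hδa, ha, mul_zero]))
    ⟨r, -a, by linear_combination hrs⟩ (by exact_mod_cast hm)

lemma ZMod.castHom_intCast_eq_zero_iff {n k : ℕ} (h : k ∣ n) (x : ℤ) :
    ZMod.castHom h (ZMod k) x = 0 ↔ (k : ℤ) ∣ x := by
  rw [map_intCast, ZMod.intCast_zmod_eq_zero_iff_dvd]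

lemma ZMod.castHom_intCast_eq_mul_iff {n k : ℕ} (h : k ∣ n) (ω x : ℤ) :
    ZMod.castHom h (ZMod k) x = ω * ZMod.castHom h (ZMod k) x ↔ (k : ℤ) ∣ (ω - 1) * x := by
  rw [map_intCast, ← Int.cast_mul, ZMod.intCast_eq_intCast_iff_dvd_sub, ← sub_one_mul]

theorem stmt_2_general (n : ℕ) (nt δ α : ℕ)
    (hnt : nt = if Even n then n / 2 else n)
    (hδ : δ ∣ nt) (hα : α = Nat.gcd δ (nt / δ))
    (r s : ℤ)
    (hrs : r * ((nt / (δ * α) : ℕ) : ℤ) - s * ((δ / α : ℕ) : ℤ) = 1)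
    (ω : ℤ)
    (hω : ω = r * ((nt / (δ * α) : ℕ) : ℤ) + s * ((δ / α : ℕ) : ℤ))
    (hαn : α ∣ n) (hnαn : n / α ∣ n) (hntδn : nt / δ ∣ n)
    (Z : ZMod n → ZMod n → ℕ)
    (hZ : ∀ l m : ZMod n,
      Z l m = if (ZMod.castHom hαn (ZMod α) l = 0 ∧ ZMod.castHom hαn (ZMod α) m = 0 ∧
          ZMod.castHom hnαn (ZMod (n / α)) m
            = (ω : ZMod (n / α)) * ZMod.castHom hnαn (ZMod (n / α)) l)
        then 1 else 0) :
    ∀ l : ZMod n,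
      Z l l = if ZMod.castHom hntδn (ZMod (nt / δ)) l = 0 then 1 else 0 := by
  intro l
  obtain ⟨x, rfl⟩ := ZMod.intCast_surjective l
  have hω1 : ω - 1 = 2 * s * ((δ / α : ℕ) : ℤ) := by rw [hω]; linear_combination hrs
  rw [hZ]
  refine if_congr ?_ rfl rfl
  rw [ZMod.castHom_intCast_eq_zero_iff, ZMod.castHom_intCast_eq_mul_iff,
    ZMod.castHom_intCast_eq_zero_iff, and_self_left, hω1]
  exact dvd_and_dvd_iff_dvd_div hnt hδ hα hrs x

/-- For the `ℤ_n` conformal field theory modular invariants `Z⁽δ⁾`, the diagonal entry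
`Z⁽δ⁾_{λ,λ}` equals `1` if `λ ≡ 0 mod nt/δ` and `0` otherwise, where `nt = n` for `n` odd
and `nt = n/2` for `n` even. -/
theorem stmt_2 (n : ℕ) [NeZero n] (nt δ α : ℕ)
    (hnt : nt = if Even n then n / 2 else n)
    (hδ : δ ∣ nt) (hα : α = Nat.gcd δ (nt / δ))
    (r s : ℤ)
    (hrs : r * ((nt / (δ * α) : ℕ) : ℤ) - s * ((δ / α : ℕ) : ℤ) = 1)
    (ω : ℤ)
    (hω : ω = r * ((nt / (δ * α) : ℕ) : ℤ) + s * ((δ / α : ℕ) : ℤ))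
    (hαn : α ∣ n) (hnαn : n / α ∣ n) (hntδn : nt / δ ∣ n)
    (Z : ZMod n → ZMod n → ℕ)
    (hZ : ∀ l m : ZMod n,
      Z l m = if (ZMod.castHom hαn (ZMod α) l = 0 ∧ ZMod.castHom hαn (ZMod α) m = 0 ∧
          ZMod.castHom hnαn (ZMod (n / α)) m
            = (ω : ZMod (n / α)) * ZMod.castHom hnαn (ZMod (n / α)) l)
        then 1 else 0) :
    ∀ l : ZMod n,
      Z l l = if ZMod.castHom hntδn (ZMod (nt / δ)) l = 0 then 1 else 0 :=
  stmt_2_general n nt δ α hnt hδ hα r s hrs ω hω hαn hnαn hntδn Z hZ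
end

section
/- The trace of the Z_n modular invariant Z^{(δ)} equals εδ, where ε = 2 if n is even and ε = 1 if n is odd. -/
/-!
Write `ñ = δ α m` and `δ = α d`, so that `n / α = ε α d m`, and the Bézout relation
`r m - s d = 1` gives `ω - 1 = 2 s d` with `m` coprime to `s`. For `λ = α u` the condition
`(ω - 1) λ ≡ 0 mod n / α` then reads `ε m ∣ 2 s u`; since `m` is coprime to `s`, and odd when
`ε = 1`, this says `m ∣ u`. Hence the diagonal entry is `1` exactly on the multiples of `α m` in
`ℤ/nℤ`, and there are `n / (α m) = ε δ` of them.
-/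

open Finset

theorem mul_dvd_two_mul_iff {ε e m s u : ℤ} (hεe : ε * e = 2) (hcop : IsCoprime m (e * s)) :
    ε * m ∣ 2 * s * u ↔ m ∣ u := by
  have hε : ε ≠ 0 := by rintro rfl; simp at hεe
  rw [← hεe, mul_assoc ε e, mul_assoc ε, mul_dvd_mul_iff_left hε]
  exact ⟨hcop.dvd_of_dvd_mul_left, fun h => h.mul_left _⟩

theorem dvd_and_dvd_two_mul_iff {ε e a d m s v : ℤ} (hεe : ε * e = 2) (hcop : IsCoprime m (e * s))
    (had : a * d ≠ 0) : a ∣ v ∧ ε * (a * d) * m ∣ 2 * s * d * v ↔ a * m ∣ v := by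
  have key (u : ℤ) : ε * (a * d) * m ∣ 2 * s * d * (a * u) ↔ a * m ∣ a * u := by
    rw [show ε * (a * d) * m = a * d * (ε * m) by ring,
      show 2 * s * d * (a * u) = a * d * (2 * s * u) by ring, mul_dvd_mul_iff_left had,
      mul_dvd_two_mul_iff hεe hcop, mul_dvd_mul_iff_left (left_ne_zero_of_mul had)]
  constructor
  · rintro ⟨⟨u, rfl⟩, h⟩
    exact (key u).1 h
  · intro h
    obtain ⟨u, rfl⟩ := (dvd_mul_right a m).trans h
    exact ⟨dvd_mul_right a u, (key u).2 h⟩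

theorem ZMod.castHom_eq_zero_iff_dvd_val {n a : ℕ} [NeZero n] (h : a ∣ n) (l : ZMod n) :
    ZMod.castHom h (ZMod a) l = 0 ↔ a ∣ l.val := by
  rw [ZMod.castHom_apply, ← ZMod.natCast_val, ZMod.natCast_eq_zero_iff]

theorem ZMod.castHom_eq_intCast_mul_iff {n b : ℕ} [NeZero n] (h : b ∣ n) (ω : ℤ) (l : ZMod n) :
    ZMod.castHom h (ZMod b) l = ω * ZMod.castHom h (ZMod b) l ↔ (b : ℤ) ∣ (ω - 1) * l.val := by
  rw [ZMod.castHom_apply, ← ZMod.natCast_val, ← ZMod.intCast_zmod_eq_zero_iff_dvd, eq_comm,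
    ← sub_eq_zero]
  push_cast
  rw [sub_one_mul]

theorem ZMod.card_filter_dvd_val {n c : ℕ} [NeZero n] (hc : c ∣ n) :
    #{l : ZMod n | c ∣ l.val} = n / c := by
  obtain ⟨k, rfl⟩ := Nat.exists_eq_succ_of_ne_zero (NeZero.ne n)
  have hval : #{l : ZMod (k + 1) | c ∣ l.val} = #{i ∈ range (k + 1) | c ∣ i} := by
    simp only [card_filter]
    exact Fin.sum_univ_eq_sum_range (fun i => if c ∣ i then 1 else 0) (k + 1)
  rcases Nat.eq_zero_or_pos c with rfl | hc0
  · simp at hc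
  rw [hval, ← Nat.count_eq_card_filter_range]
  simpa [Nat.modEq_zero_iff_dvd, Nat.mod_eq_zero_of_dvd hc] using Nat.count_modEq_card (k + 1) hc0 0

theorem Nat.ite_even_mul_ite_even_div_two (n : ℕ) :
    (if Even n then 2 else 1) * (if Even n then n / 2 else n) = n := by
  split_ifs with h
  exacts [Nat.mul_div_cancel' h.two_dvd, one_mul n]

theorem isCoprime_ite_even_mul {n m : ℕ} {s : ℤ} (hm : m ∣ if Even n then n / 2 else n)
    (hms : IsCoprime (m : ℤ) s) : IsCoprime (m : ℤ) ((if Even n then 1 else 2) * s) := by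
  split_ifs at hm ⊢ with h
  · simpa using hms
  · have hm_odd : Odd m := (Nat.not_even_iff_odd.1 h).of_dvd_nat hm
    exact (Nat.isCoprime_iff_coprime.2 (Nat.coprime_two_right.2 hm_odd)).mul_right hms

theorem ZMod.castHom_eq_zero_and_eq_intCast_mul_iff {n a b d m : ℕ} [NeZero n] (ha : a ∣ n)
    (hb : b ∣ n) {ε e s ω : ℤ} (hb_eq : (b : ℤ) = ε * (a * d) * m) (hω : ω - 1 = 2 * s * d)
    (hεe : ε * e = 2) (hcop : IsCoprime (m : ℤ) (e * s)) (had : a * d ≠ 0) (l : ZMod n) :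
    (ZMod.castHom ha (ZMod a) l = 0 ∧
      ZMod.castHom hb (ZMod b) l = ω * ZMod.castHom hb (ZMod b) l) ↔ a * m ∣ l.val := by
  rw [ZMod.castHom_eq_zero_iff_dvd_val, ZMod.castHom_eq_intCast_mul_iff, hb_eq, hω,
    ← Int.natCast_dvd_natCast, ← Int.natCast_dvd_natCast, Nat.cast_mul]
  exact dvd_and_dvd_two_mul_iff hεe hcop (by exact_mod_cast had)

/-- The trace of the `ℤ_n` modular invariant `Z⁽δ⁾` equals `ε·δ`, where `ε = 2` if `n` is
even and `ε = 1` if `n` is odd. -/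
theorem stmt_3 (n : ℕ) [NeZero n] (nt δ α : ℕ)
    (hnt : nt = if Even n then n / 2 else n)
    (hδ : δ ∣ nt) (hα : α = Nat.gcd δ (nt / δ))
    (r s : ℤ)
    (hrs : r * ((nt / (δ * α) : ℕ) : ℤ) - s * ((δ / α : ℕ) : ℤ) = 1)
    (ω : ℤ)
    (hω : ω = r * ((nt / (δ * α) : ℕ) : ℤ) + s * ((δ / α : ℕ) : ℤ))
    (hαn : α ∣ n) (hnαn : n / α ∣ n)
    (Z : ZMod n → ZMod n → ℕ)
    (hZ : ∀ l m : ZMod n,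
      Z l m = if (ZMod.castHom hαn (ZMod α) l = 0 ∧ ZMod.castHom hαn (ZMod α) m = 0 ∧
          ZMod.castHom hnαn (ZMod (n / α)) m
            = (ω : ZMod (n / α)) * ZMod.castHom hnαn (ZMod (n / α)) l)
        then 1 else 0) :
    ∑ l : ZMod n, Z l l = (if Even n then 2 else 1) * δ := by
  set ε : ℕ := if Even n then 2 else 1 with hε
  set m := nt / (δ * α)
  set d := δ / α
  have hnt_eq : nt = δ * α * m :=
    (Nat.mul_div_cancel' (hα ▸ Nat.mul_dvd_of_dvd_div hδ (Nat.gcd_dvd_right _ _))).symm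
  have hδ_eq : δ = α * d := (Nat.mul_div_cancel' (hα ▸ Nat.gcd_dvd_left _ _)).symm
  have hn : n = ε * nt := hnt ▸ (Nat.ite_even_mul_ite_even_div_two n).symm
  have hn_α : n = α * (ε * (α * d) * m) := by rw [hn, hnt_eq, hδ_eq]; ring
  have hn_αm : n = α * m * (ε * δ) := by rw [hn, hnt_eq]; ring
  obtain ⟨hα0, ⟨-, -, hd0⟩, hm0⟩ : α ≠ 0 ∧ (ε ≠ 0 ∧ α ≠ 0 ∧ d ≠ 0) ∧ m ≠ 0 := by
    simpa only [ne_eq, mul_eq_zero, not_or, hn_α] using NeZero.ne n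
  have hcop : IsCoprime (m : ℤ) ((if Even n then 1 else 2) * s) :=
    isCoprime_ite_even_mul (hnt ▸ hnt_eq ▸ dvd_mul_left m (δ * α)) ⟨r, -d, by linarith⟩
  have hnα : ((n / α : ℕ) : ℤ) = ε * (α * d) * m := by
    rw [hn_α, Nat.mul_div_cancel_left _ (Nat.pos_of_ne_zero hα0)]; push_cast; ring
  have hω1 : ω - 1 = 2 * s * d := by rw [hω]; linarith
  have hεe : (ε : ℤ) * (if Even n then 1 else 2) = 2 := by rw [hε]; split_ifs <;> norm_num
  have hdiag (l : ZMod n) : Z l l = if α * m ∣ l.val then 1 else 0 := by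
    rw [hZ]
    exact if_congr (and_self_left.trans (ZMod.castHom_eq_zero_and_eq_intCast_mul_iff hαn hnαn
      hnα hω1 hεe hcop (mul_ne_zero hα0 hd0) l)) rfl rfl
  rw [sum_congr rfl fun l _ => hdiag l, ← card_filter, ZMod.card_filter_dvd_val ⟨ε * δ, hn_αm⟩,
    hn_αm, Nat.mul_div_cancel_left _ (Nat.pos_of_ne_zero (mul_ne_zero hα0 hm0))]
end

section
/- For the level-1 SO(n) models with n = 16ℓ, the 4×4 matrices 1, W, X_s, X_c = W X_s W, Q = X_s W, and its transpose Qᵀ = W X_s are precisely all the non-negative integer matrices Z with Z_{0,0} = 1 commuting with the given S and T matrices. -/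
open Matrix

noncomputable def SO16S : Matrix (Fin 4) (Fin 4) ℂ :=
  (1 / 2 : ℂ) • !![1, 1, 1, 1; 1, 1, -1, -1; 1, -1, 1, -1; 1, -1, -1, 1]

def SO16W : Matrix (Fin 4) (Fin 4) ℂ :=
  !![1, 0, 0, 0; 0, 1, 0, 0; 0, 0, 0, 1; 0, 0, 1, 0]

def SO16Xs : Matrix (Fin 4) (Fin 4) ℂ :=
  !![1, 0, 1, 0; 0, 0, 0, 0; 1, 0, 1, 0; 0, 0, 0, 0]

noncomputable def SO16Xc : Matrix (Fin 4) (Fin 4) ℂ := SO16W * SO16Xs * SO16W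

noncomputable def SO16Q : Matrix (Fin 4) (Fin 4) ℂ := SO16Xs * SO16W

/-! Commuting with `T` (as `ζ ≠ 0`) kills the entries of `Z` that link the index `1`, whose
`T`-eigenvalue differs from the others, to the remaining indices; commuting with `S` is commuting
with the integer matrix `H = 2S`. Writing `Z` as the cast of a natural-number matrix, `ZH = HZ`
becomes a linear system over `ℤ` in the nine remaining entries. Its `(0,1)` entry reads
`Z 0 2 + Z 0 3 + Z 1 1 = 1`, and in each of the three cases this allows, the system has exactly two
solutions in `ℕ`. The converse is a finite computation. -/

namespace Matrix

variable {m n R : Type*}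

theorem exists_map_natCast_iff [NatCast R] {A : Matrix m n R} :
    (∀ i j, ∃ k : ℕ, A i j = k) ↔ ∃ N : Matrix m n ℕ, N.map (↑) = A := by
  refine ⟨fun h => ?_, by rintro ⟨N, rfl⟩ i j; exact ⟨N i j, rfl⟩⟩
  choose N hN using h
  exact ⟨N, ext fun i j => (hN i j).symm⟩

variable [Fintype n] [DecidableEq n]

theorem apply_eq_zero_of_commute_diagonal [CommRing R] [NoZeroDivisors R] {A : Matrix n n R}
    {d : n → R} (h : Commute A (diagonal d)) {i j : n} (hij : d i ≠ d j) : A i j = 0 := by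
  have hij' : A i j * d j = d i * A i j := by
    simpa only [mul_diagonal, diagonal_mul] using congrFun₂ h.eq i j
  have : (d j - d i) * A i j = 0 := by linear_combination hij'
  exact (mul_eq_zero.1 this).resolve_left (sub_ne_zero.2 hij.symm)

theorem commute_map_natCast_map_intCast_iff [Ring R] [CharZero R] {N : Matrix n n ℕ}
    {A : Matrix n n ℤ} :
    Commute (N.map ((↑) : ℕ → R)) (A.map (↑)) ↔ Commute (N.map ((↑) : ℕ → ℤ)) A := by
  have hN : N.map ((↑) : ℕ → R) = (Int.castRingHom R).mapMatrix (N.map ((↑) : ℕ → ℤ)) := by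
    ext; simp
  rw [hN]
  exact commute_map_iff (f := (Int.castRingHom R).mapMatrix) (map_injective Int.cast_injective)

end Matrix

def SO16H : Matrix (Fin 4) (Fin 4) ℤ := !![1, 1, 1, 1; 1, 1, -1, -1; 1, -1, 1, -1; 1, -1, -1, 1]

def natSO16W : Matrix (Fin 4) (Fin 4) ℕ := !![1, 0, 0, 0; 0, 1, 0, 0; 0, 0, 0, 1; 0, 0, 1, 0]

def natSO16Xs : Matrix (Fin 4) (Fin 4) ℕ := !![1, 0, 1, 0; 0, 0, 0, 0; 1, 0, 1, 0; 0, 0, 0, 0]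

def so16NatInvariants : Set (Matrix (Fin 4) (Fin 4) ℕ) :=
  {1, natSO16W, natSO16Xs, natSO16W * natSO16Xs * natSO16W, natSO16Xs * natSO16W,
    (natSO16Xs * natSO16W)ᵀ}

theorem SO16S_eq_smul_map : SO16S = (1 / 2 : ℂ) • SO16H.map (↑) := by
  ext i j; fin_cases i <;> fin_cases j <;> simp [SO16S, SO16H]

theorem SO16W_eq_map : SO16W = natSO16W.map (↑) := by
  ext i j; fin_cases i <;> fin_cases j <;> simp [SO16W, natSO16W]

theorem SO16Xs_eq_map : SO16Xs = natSO16Xs.map (↑) := by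
  ext i j; fin_cases i <;> fin_cases j <;> simp [SO16Xs, natSO16Xs]

theorem image_so16NatInvariants :
    (Matrix.map · ((↑) : ℕ → ℂ)) '' so16NatInvariants =
      {1, SO16W, SO16Xs, SO16Xc, SO16Q, SO16Q.transpose} := by
  simp only [so16NatInvariants, Set.image_insert_eq, Set.image_singleton, SO16Xc, SO16Q,
    SO16W_eq_map, SO16Xs_eq_map, ← Nat.coe_castRingHom, Matrix.map_mul, transpose_map]
  simp

theorem commute_map_natCast_SO16S_iff {N : Matrix (Fin 4) (Fin 4) ℕ} :
    Commute (N.map ((↑) : ℕ → ℂ)) SO16S ↔ Commute (N.map ((↑) : ℕ → ℤ)) SO16H := by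
  rw [SO16S_eq_smul_map, Commute.smul_right_iff₀ (by norm_num),
    commute_map_natCast_map_intCast_iff]

theorem commute_map_natCast_smul_diagonal_iff {ζ : ℂ} (hζ : ζ ≠ 0)
    {N : Matrix (Fin 4) (Fin 4) ℕ} :
    Commute (N.map ((↑) : ℕ → ℂ)) (ζ • diagonal ![1, -1, 1, 1]) ↔
      Commute (N.map ((↑) : ℕ → ℤ)) (diagonal ![1, -1, 1, 1]) := by
  have hdiag : diagonal ![(1 : ℂ), -1, 1, 1] = (diagonal ![(1 : ℤ), -1, 1, 1]).map (↑) := by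
    rw [diagonal_map Int.cast_zero]
    congr 1
    ext i; fin_cases i <;> simp
  rw [Commute.smul_right_iff₀ hζ, hdiag, commute_map_natCast_map_intCast_iff]

theorem mem_so16NatInvariants_of_commute {b c d e f g h i j : ℕ}
    (hH : Commute ((!![1, 0, b, c; 0, d, 0, 0; e, 0, f, g; h, 0, i, j] :
      Matrix (Fin 4) (Fin 4) ℕ).map ((↑) : ℕ → ℤ)) SO16H) :
    !![1, 0, b, c; 0, d, 0, 0; e, 0, f, g; h, 0, i, j] ∈ so16NatInvariants := by
  simp only [Commute, SemiconjBy, ← ext_iff, Fin.forall_fin_succ, IsEmpty.forall_iff, mul_apply,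
    Fin.sum_univ_four, SO16H, map_apply, of_apply, cons_val', cons_val, cons_val_zero,
    cons_val_one, cons_val_succ, cons_val_fin_one, Nat.cast_one, Nat.cast_zero, mul_one, mul_zero,
    mul_neg, add_zero, zero_add, neg_zero, and_true] at hH
  simp only [so16NatInvariants, Set.mem_insert_iff, Set.mem_singleton_iff]
  obtain ⟨rfl, rfl, rfl⟩ | ⟨rfl, rfl, rfl⟩ | ⟨rfl, rfl, rfl⟩ :
      (b = 0 ∧ c = 0 ∧ d = 1) ∨ (b = 1 ∧ c = 0 ∧ d = 0) ∨ (b = 0 ∧ c = 1 ∧ d = 0) := by omega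
  · obtain ⟨rfl, rfl, rfl, rfl, rfl, rfl⟩ | ⟨rfl, rfl, rfl, rfl, rfl, rfl⟩ :
        (e = 0 ∧ f = 1 ∧ g = 0 ∧ h = 0 ∧ i = 0 ∧ j = 1) ∨
          (e = 0 ∧ f = 0 ∧ g = 1 ∧ h = 0 ∧ i = 1 ∧ j = 0) := by omega
    all_goals decide
  · obtain ⟨rfl, rfl, rfl, rfl, rfl, rfl⟩ | ⟨rfl, rfl, rfl, rfl, rfl, rfl⟩ :
        (e = 1 ∧ f = 1 ∧ g = 0 ∧ h = 0 ∧ i = 0 ∧ j = 0) ∨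
          (e = 0 ∧ f = 0 ∧ g = 0 ∧ h = 1 ∧ i = 1 ∧ j = 0) := by omega
    all_goals decide
  · obtain ⟨rfl, rfl, rfl, rfl, rfl, rfl⟩ | ⟨rfl, rfl, rfl, rfl, rfl, rfl⟩ :
        (e = 0 ∧ f = 0 ∧ g = 0 ∧ h = 1 ∧ i = 0 ∧ j = 1) ∨
          (e = 1 ∧ f = 0 ∧ g = 1 ∧ h = 0 ∧ i = 0 ∧ j = 0) := by omega
    all_goals decide

theorem mem_so16NatInvariants_iff {N : Matrix (Fin 4) (Fin 4) ℕ} :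
    N ∈ so16NatInvariants ↔ Commute (N.map ((↑) : ℕ → ℤ)) SO16H ∧
      Commute (N.map ((↑) : ℕ → ℤ)) (diagonal ![1, -1, 1, 1]) ∧ N 0 0 = 1 := by
  constructor
  · rintro (rfl | rfl | rfl | rfl | rfl | rfl) <;>
      exact ⟨(commute_iff_eq _ _).2 (by decide), (commute_iff_eq _ _).2 (by decide), rfl⟩
  · rintro ⟨hH, hD, h00⟩
    have hzero : ∀ i j, ![(1 : ℤ), -1, 1, 1] i ≠ ![1, -1, 1, 1] j → N i j = 0 := fun i j hij =>
      Nat.cast_eq_zero.1 (apply_eq_zero_of_commute_diagonal hD hij)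
    have hN : N = !![1, 0, N 0 2, N 0 3; 0, N 1 1, 0, 0; N 2 0, 0, N 2 2, N 2 3;
        N 3 0, 0, N 3 2, N 3 3] := by
      ext i j
      fin_cases i <;> fin_cases j <;> first | exact h00 | rfl | exact hzero _ _ (by decide)
    rw [hN] at hH ⊢
    exact mem_so16NatInvariants_of_commute hH

/-- For the level-1 `SO(16ℓ)` models, the matrices `1, W, X_s, X_c = W X_s W, Q = X_s W`
and `Qᵀ = W X_s` are precisely all the non-negative integer matrices `Z` with `Z 0 0 = 1`
commuting with the given `S` and `T` matrices. -/
theorem stmt_4 (ζ : ℂ) (hζ : ζ ≠ 0)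
    (T : Matrix (Fin 4) (Fin 4) ℂ) (hT : T = ζ • Matrix.diagonal ![1, -1, 1, 1])
    (Z : Matrix (Fin 4) (Fin 4) ℂ) :
    ((∀ i j, ∃ m : ℕ, Z i j = (m : ℂ)) ∧ Z * SO16S = SO16S * Z ∧ Z * T = T * Z ∧
      Z 0 0 = 1)
    ↔ (Z = 1 ∨ Z = SO16W ∨ Z = SO16Xs ∨ Z = SO16Xc ∨ Z = SO16Q ∨
        Z = SO16Q.transpose) := by
  subst hT
  have hmem : (Z = 1 ∨ Z = SO16W ∨ Z = SO16Xs ∨ Z = SO16Xc ∨ Z = SO16Q ∨ Z = SO16Q.transpose) ↔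
      Z ∈ (Matrix.map · ((↑) : ℕ → ℂ)) '' so16NatInvariants := by
    simp only [image_so16NatInvariants, Set.mem_insert_iff, Set.mem_singleton_iff]
  rw [hmem, exists_map_natCast_iff]
  constructor
  · rintro ⟨⟨N, rfl⟩, hS, hT, h00⟩
    exact ⟨N, mem_so16NatInvariants_iff.2 ⟨commute_map_natCast_SO16S_iff.1 hS,
      (commute_map_natCast_smul_diagonal_iff hζ).1 hT, Nat.cast_eq_one.1 h00⟩, rfl⟩
  · rintro ⟨N, hN, rfl⟩
    obtain ⟨hS, hT, h00⟩ := mem_so16NatInvariants_iff.1 hN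
    exact ⟨⟨N, rfl⟩, commute_map_natCast_SO16S_iff.2 hS,
      (commute_map_natCast_smul_diagonal_iff hζ).2 hT, by simp [h00]⟩
end

section
/- Given a finite commutative fusion ring with non-negative integer structure constants N_{λ,μ}^ν, conjugation λ ↦ λ̄ with N_λ̄ = (N_λ)ᵀ, and a simultaneous unitary diagonalization of the fusion matrices N_λ with eigenvalues γ^λ_ρ, the structure constants are recovered by the Verlinde formula N_{λ,μ}^ν = Σ_ρ (S_{λ,ρ}/S_{0,ρ}) S_{μ,ρ} S_{ν,ρ}*, where S_{λ,ρ}/S_{0,ρ} = γ^λ_ρ. -/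
/-!
The eigenvector equations say that the fusion matrix `N_l` satisfies `N_l S = S diag(γ^l)`.
Since `S` is unitary this can be solved for `N_l = S diag(γ^l) Sᴴ`, and the `(μ, ν)` entry of the
right-hand side is the Verlinde sum.
-/

open Matrix

theorem Matrix.eq_mul_diagonal_mul_conjTranspose_of_mul_eq {n α : Type*} [Fintype n]
    [DecidableEq n] [Semiring α] [Star α] {A S : Matrix n n α} {d : n → α} (hS : S * Sᴴ = 1)
    (h : A * S = S * diagonal d) : A = S * diagonal d * Sᴴ := by
  rw [← h, Matrix.mul_assoc, hS, Matrix.mul_one]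

theorem stmt_6_general {Δ : Type*} [Fintype Δ] [DecidableEq Δ] (o : Δ)
    (N : Δ → Δ → Δ → ℕ)
    (S : Matrix Δ Δ ℂ)
    (hSU : S * S.conjTranspose = 1)
    (heig : ∀ l ρ μ, ∑ ν, (N l μ ν : ℂ) * S ν ρ = (S l ρ / S o ρ) * S μ ρ) :
    ∀ l μ ν, (N l μ ν : ℂ) =
      ∑ ρ, (S l ρ / S o ρ) * S μ ρ * (starRingEnd ℂ) (S ν ρ) := by
  intro l μ ν
  have hdiag : of (fun μ ν => (N l μ ν : ℂ)) * S = S * diagonal fun ρ => S l ρ / S o ρ := by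
    ext μ ρ
    rw [mul_apply, mul_diagonal, mul_comm (S μ ρ), ← heig]
    rfl
  have hentry := congrFun₂ (eq_mul_diagonal_mul_conjTranspose_of_mul_eq hSU hdiag) μ ν
  rw [mul_apply] at hentry
  simpa only [of_apply, mul_diagonal, conjTranspose_apply, RCLike.star_def,
    mul_comm (S μ _)] using hentry

/-- Verlinde formula: for a finite commutative fusion ring with conjugation, whose fusion
matrices are simultaneously diagonalized by a unitary matrix `S` with eigenvalues
`S l ρ / S o ρ`, the structure constants are recovered as
`N l μ ν = ∑ ρ, (S l ρ / S o ρ) * S μ ρ * conj (S ν ρ)`. -/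
theorem stmt_6 {Δ : Type*} [Fintype Δ] [DecidableEq Δ] (o : Δ)
    (N : Δ → Δ → Δ → ℕ) (bar : Δ ≃ Δ)
    (hunit : ∀ μ ν, N o μ ν = if μ = ν then 1 else 0)
    (hcomm : ∀ l m ν, N l m ν = N m l ν)
    (hassoc : ∀ l m ν σ', ∑ β, N l ν β * N m β σ' = ∑ β, N l m β * N β ν σ')
    (hbar : ∀ l μ ν, N (bar l) μ ν = N l ν μ)
    (S : Matrix Δ Δ ℂ)
    (hSU : S * S.conjTranspose = 1)
    (hS0 : ∀ ρ, S o ρ ≠ 0)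
    (heig : ∀ l ρ μ, ∑ ν, (N l μ ν : ℂ) * S ν ρ = (S l ρ / S o ρ) * S μ ρ) :
    ∀ l μ ν, (N l μ ν : ℂ) =
      ∑ ρ, (S l ρ / S o ρ) * S μ ρ * (starRingEnd ℂ) (S ν ρ) :=
  stmt_6_general o N S hSU heig
end

section
/- Let ω: Δ → Δ be a bijection with ω(0)=0 and define the permutation matrix Z_{λ,μ} = δ_{λ,ω(μ)}. If Z commutes with the S-matrix of a fusion ring (S unitary, diagonalizing the fusion matrices via Verlinde's formula), then ω is an automorphism of the fusion rules: N_{ω(λ),ω(μ)}^{ω(ν)} = N_{λ,μ}^ν for all λ,μ,ν. -/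
open Matrix Finset

/-!
Conjugating `S` by the permutation matrix of `ω` permutes rows and columns alike, so `Z S = S Z`
says exactly that `S (ω l) (ω m) = S l m`. Since also `ω 0 = 0`, reindexing the Verlinde sum by
`ρ ↦ ω ρ` turns `N (ω l) (ω m) (ω ν)` term by term into `N l m ν`.
-/

theorem Matrix.eq_toMatrix_toPEquiv_symm_of_apply {n R : Type*} [DecidableEq n] [Zero R] [One R]
    {ω : n ≃ n} {Z : Matrix n n R} (hZ : ∀ l m, Z l m = if l = ω m then 1 else 0) :
    Z = ω.symm.toPEquiv.toMatrix := by
  ext l m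
  simp [hZ, PEquiv.toMatrix_apply, Equiv.symm_apply_eq]

theorem Matrix.apply_perm_perm_of_toMatrix_toPEquiv_mul_comm {n R : Type*} [Fintype n]
    [DecidableEq n] [NonAssocSemiring R] {ω : n ≃ n} {S : Matrix n n R}
    (h : ω.symm.toPEquiv.toMatrix * S = S * ω.symm.toPEquiv.toMatrix) (l m : n) :
    S (ω l) (ω m) = S l m := by
  rw [PEquiv.toMatrix_toPEquiv_mul, PEquiv.mul_toMatrix_toPEquiv, Equiv.symm_symm] at h
  simpa using (congrFun₂ h (ω l) m).symm

def verlindeCoeff {Δ K : Type*} [Fintype Δ] [Field K] [StarRing K] (S : Matrix Δ Δ K) (o : Δ)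
    (l m ν : Δ) : K :=
  ∑ ρ, S l ρ * S m ρ * starRingEnd K (S ν ρ) / S o ρ

theorem verlindeCoeff_perm {Δ K : Type*} [Fintype Δ] [Field K] [StarRing K] {S : Matrix Δ Δ K}
    {o : Δ} {ω : Δ ≃ Δ} (hω : ω o = o) (hS : ∀ l m, S (ω l) (ω m) = S l m) (l m ν : Δ) :
    verlindeCoeff S o (ω l) (ω m) (ω ν) = verlindeCoeff S o l m ν := by
  unfold verlindeCoeff
  rw [← Equiv.sum_comp ω]
  refine Finset.sum_congr rfl fun ρ _ => ?_
  rw [hS, hS, hS, ← hω, hS, hω]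

theorem stmt_19_general {Δ : Type*} [Fintype Δ] [DecidableEq Δ] (o : Δ)
    (S : Matrix Δ Δ ℂ)
    (N : Δ → Δ → Δ → ℂ)
    (hN : ∀ l m ν, N l m ν = ∑ ρ, S l ρ * S m ρ * (starRingEnd ℂ) (S ν ρ) / S o ρ)
    (ω : Δ ≃ Δ) (hω : ω o = o)
    (Z : Matrix Δ Δ ℂ) (hZ : ∀ l m, Z l m = if l = ω m then 1 else 0)
    (hcomm : Z * S = S * Z) :
    ∀ l m ν, N (ω l) (ω m) (ω ν) = N l m ν := by
  rw [Matrix.eq_toMatrix_toPEquiv_symm_of_apply hZ] at hcomm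
  have hS := Matrix.apply_perm_perm_of_toMatrix_toPEquiv_mul_comm hcomm
  intro l m ν
  simpa only [hN, verlindeCoeff] using verlindeCoeff_perm hω hS l m ν

/-- If the permutation matrix `Z l m = δ_{l, ω m}` (with `ω 0 = 0`) commutes with the
unitary S-matrix defining the fusion coefficients by Verlinde's formula, then `ω` is an
automorphism of the fusion rules: `N (ω l) (ω m) (ω ν) = N l m ν`. -/
theorem stmt_19 {Δ : Type*} [Fintype Δ] [DecidableEq Δ] (o : Δ)
    (S : Matrix Δ Δ ℂ) (hSU : S * S.conjTranspose = 1) (hS0 : ∀ ρ, S o ρ ≠ 0)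
    (N : Δ → Δ → Δ → ℂ)
    (hN : ∀ l m ν, N l m ν = ∑ ρ, S l ρ * S m ρ * (starRingEnd ℂ) (S ν ρ) / S o ρ)
    (ω : Δ ≃ Δ) (hω : ω o = o)
    (Z : Matrix Δ Δ ℂ) (hZ : ∀ l m, Z l m = if l = ω m then 1 else 0)
    (hcomm : Z * S = S * Z) :
    ∀ l m ν, N (ω l) (ω m) (ω ν) = N l m ν :=
  stmt_19_general o S N hN ω hω Z hZ hcomm
end
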